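/- Curvature formula for path complements: define polynomials p_m for m ≥ -1 by p_{-1} = p_0 = 1 and p_m(t) = p_{m-1}(t) + t·p_{m-2}(t) for m ≥ 1 (so p_m is the simplex generating polynomial of G_m^+). Let n ≥ 1 and let k ∈ {1, …, n} be a vertex of G_n^+ = (P_n)ᶜ. Then the simplex generating polynomial of the unit sphere S(k) of k in G_n^+ satisfies f_{S(k)}(t) = p_{k-2}(t) · p_{n-k-1}(t) for all real t; consequently the Euler–Levitt curvature of G_n^+ at k equals K_n(k) = ∫_{-1}^0 p_{k-2}(t) · p_{n-k-1}(t) dt. -/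

import Mathlib

/-- The cycle graph `C_n` on `Fin n`: `i ~ j` iff `i - j ≡ ±1 (mod n)`. -/
def cycleGraph (n : ℕ) : SimpleGraph (Fin n) where
  Adj i j := i ≠ j ∧ ((i - j : Fin n).val = 1 ∨ (j - i : Fin n).val = 1)
  symm := by
    constructor
    intro i j h
    exact ⟨h.1.symm, h.2.symm⟩
  loopless := by
    constructor
    intro i h
    exact h.1 rfl

instance (n : ℕ) : DecidableRel (cycleGraph n).Adj :=
  fun a b => inferInstanceAs (Decidable (a ≠ b ∧ ((a - b : Fin n).val = 1 ∨ (b - a : Fin n).val = 1)))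

/-- The path graph `P_n` on `Fin n`: `i ~ j` iff `|i - j| = 1`. -/
def pathGraph' (n : ℕ) : SimpleGraph (Fin n) where
  Adj i j := (i : ℕ) + 1 = (j : ℕ) ∨ (j : ℕ) + 1 = (i : ℕ)
  symm := by
    constructor
    intro i j h
    exact h.symm
  loopless := by
    constructor
    intro i h
    rcases h with h | h <;> omega

instance (n : ℕ) : DecidableRel (pathGraph' n).Adj :=
  fun a b => inferInstanceAs (Decidable ((a : ℕ) + 1 = (b : ℕ) ∨ (b : ℕ) + 1 = (a : ℕ)))

/-- The finset of all nonempty cliques of a finite simple graph. -/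
noncomputable def cliquesOf {V : Type*} [Finite V] (G : SimpleGraph V) : Finset (Finset V) := by
  classical
  letI : Fintype V := Fintype.ofFinite V
  exact Finset.univ.filter (fun s : Finset V => s.Nonempty ∧ G.IsClique (s : Set V))

/-- The number of cliques with exactly `j` elements (the empty clique counting for `j = 0`). -/
noncomputable def cliqueCount {V : Type*} [Finite V] (G : SimpleGraph V) (j : ℕ) : ℕ := by
  classical
  letI : Fintype V := Fintype.ofFinite V
  exact (Finset.univ.filter (fun s : Finset V => G.IsClique (s : Set V) ∧ s.card = j)).card

/-- The Euler characteristic of the clique (Whitney) complex of `G`. -/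
noncomputable def eulerChar {V : Type*} [Finite V] (G : SimpleGraph V) : ℤ :=
  ∑ c ∈ cliquesOf G, (-1 : ℤ) ^ (c.card + 1)

/-- The simplex generating function `f_G(t) = 1 + ∑_c t^{|c|}`. -/
noncomputable def fgen {V : Type*} [Finite V] (G : SimpleGraph V) (t : ℝ) : ℝ :=
  1 + ∑ c ∈ cliquesOf G, t ^ c.card

/-- The Jacobsthal polynomials `p_m` (shifted by one: `jac (m+1) = p_m`, with
`p_{-1} = p_0 = 1` and `p_m = p_{m-1} + t p_{m-2}`). -/
noncomputable def jac : ℕ → ℝ → ℝ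
  | 0, _ => 1
  | 1, _ => 1
  | (m + 2), t => jac (m + 1) t + t * jac m t



noncomputable def gp (m : ℕ) (t : ℝ) : ℝ :=
  ∑ s ∈ (Finset.range m).powerset.filter (fun s => ∀ a ∈ s, a + 1 ∉ s), t ^ s.card

lemma gp_zero (t : ℝ) : gp 0 t = 1 := by
  simp [gp, Finset.sum_filter]

lemma gp_one (t : ℝ) : gp 1 t = 1 + t := by
  have h : (Finset.range 1).powerset.filter (fun s => ∀ a ∈ s, a + 1 ∉ s)
      = {∅, {0}} := by decide
  rw [gp, h]
  rw [Finset.sum_pair (by decide)]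
  simp

lemma gp_rec (m : ℕ) (t : ℝ) : gp (m + 2) t = gp (m + 1) t + t * gp m t := by
  classical
  rw [gp, ← Finset.sum_filter_add_sum_filter_not _ (fun s => (m + 1) ∈ s)]
  have h1 : ((Finset.range (m+2)).powerset.filter (fun s => ∀ a ∈ s, a + 1 ∉ s)).filter
      (fun s => (m+1) ∉ s) = (Finset.range (m+1)).powerset.filter (fun s => ∀ a ∈ s, a + 1 ∉ s) := by
    ext s
    simp only [Finset.mem_filter, Finset.mem_powerset, Finset.subset_iff, Finset.mem_range]
    constructor
    · rintro ⟨⟨hs, hok⟩, hm⟩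
      refine ⟨fun a ha => ?_, hok⟩
      have := hs ha
      have : a ≠ m + 1 := fun h => hm (h ▸ ha)
      omega
    · rintro ⟨hs, hok⟩
      exact ⟨⟨fun a ha => by have := hs ha; omega, hok⟩, fun h => by have := hs h; omega⟩
  have h2 : ∑ s ∈ ((Finset.range (m+2)).powerset.filter (fun s => ∀ a ∈ s, a + 1 ∉ s)).filter
      (fun s => (m+1) ∈ s), t ^ s.card
      = ∑ s ∈ (Finset.range m).powerset.filter (fun s => ∀ a ∈ s, a + 1 ∉ s), t * t ^ s.card := by
    refine Finset.sum_nbij' (fun s => s.erase (m+1)) (fun s => insert (m+1) s) ?_ ?_ ?_ ?_ ?_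
    · intro s hs
      simp only [Finset.mem_filter, Finset.mem_powerset, Finset.subset_iff, Finset.mem_range] at hs ⊢
      obtain ⟨⟨hsub, hok⟩, hmem⟩ := hs
      have hm : m ∉ s := fun h => hok m h hmem
      refine ⟨fun a ha => ?_, fun a ha => ?_⟩
      · rw [Finset.mem_erase] at ha
        have := hsub ha.2
        have : a ≠ m := fun h => hm (h ▸ ha.2)
        omega
      · rw [Finset.mem_erase] at ha
        intro hc
        rw [Finset.mem_erase] at hc
        exact hok a ha.2 hc.2
    · intro s hs
      simp only [Finset.mem_filter, Finset.mem_powerset, Finset.subset_iff, Finset.mem_range] at hs ⊢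
      obtain ⟨hsub, hok⟩ := hs
      have hnm : (m+1) ∉ s := fun h => by have := hsub h; omega
      refine ⟨⟨fun a ha => ?_, fun a ha hc => ?_⟩, Finset.mem_insert_self _ _⟩
      · rcases Finset.mem_insert.1 ha with h | h
        · omega
        · have := hsub h; omega
      · rcases Finset.mem_insert.1 ha with h | h
        · subst h
          rcases Finset.mem_insert.1 hc with h2 | h2
          · omega
          · have := hsub h2; omega
        · rcases Finset.mem_insert.1 hc with h2 | h2
          · have := hsub h; omega
          · exact hok a h h2
    · intro s hs
      simp only [Finset.mem_filter] at hs
      exact Finset.insert_erase hs.2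
    · intro s hs
      simp only [Finset.mem_filter, Finset.mem_powerset, Finset.subset_iff, Finset.mem_range] at hs
      exact Finset.erase_insert (fun h => by have := hs.1 h; omega)
    · intro s hs
      simp only [Finset.mem_filter] at hs
      rw [Finset.card_erase_of_mem hs.2]
      have : 1 ≤ s.card := Finset.card_pos.2 ⟨m+1, hs.2⟩
      rw [← pow_succ']
      congr 1
      omega
  rw [h1, h2, ← Finset.mul_sum, add_comm]
  rfl

lemma gp_eq_jac (m : ℕ) (t : ℝ) : gp m t = jac (m + 1) t := by
  induction m using Nat.strong_induction_on with
  | _ m ih =>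
    match m with
    | 0 => simp [gp_zero, jac]
    | 1 => rw [gp_one]; show _ = jac 1 t + t * jac 0 t; simp [jac]
    | (m + 2) =>
      rw [gp_rec, ih (m+1) (by omega), ih m (by omega)]
      rfl

lemma gp_shift (a b : ℕ) (t : ℝ) :
    ∑ s ∈ (Finset.Ico a b).powerset.filter (fun s => ∀ x ∈ s, x + 1 ∉ s), t ^ s.card
      = gp (b - a) t := by
  classical
  rw [gp]
  refine Finset.sum_nbij' (fun s => s.image (· - a)) (fun s => s.image (· + a)) ?_ ?_ ?_ ?_ ?_
  · intro s hs
    simp only [Finset.mem_filter, Finset.mem_powerset, Finset.subset_iff, Finset.mem_range,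
      Finset.mem_Ico, Finset.mem_image] at hs ⊢
    obtain ⟨hsub, hok⟩ := hs
    refine ⟨fun c hc => ?_, fun c hc hc1 => ?_⟩
    · obtain ⟨x, hx, rfl⟩ := hc
      have := hsub hx; omega
    · obtain ⟨x, hx, rfl⟩ := hc
      obtain ⟨y, hy, hyy⟩ := hc1
      have hxx := hsub hx
      have hyyy := hsub hy
      have : y = x + 1 := by omega
      exact hok x hx (this ▸ hy)
  · intro s hs
    simp only [Finset.mem_filter, Finset.mem_powerset, Finset.subset_iff, Finset.mem_range,
      Finset.mem_Ico, Finset.mem_image] at hs ⊢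
    obtain ⟨hsub, hok⟩ := hs
    refine ⟨fun c hc => ?_, fun c hc hc1 => ?_⟩
    · obtain ⟨x, hx, rfl⟩ := hc
      have := hsub hx; omega
    · obtain ⟨x, hx, rfl⟩ := hc
      obtain ⟨y, hy, hyy⟩ := hc1
      have : y = x + 1 := by omega
      exact hok x hx (this ▸ hy)
  · intro s hs
    simp only [Finset.mem_filter, Finset.mem_powerset, Finset.subset_iff, Finset.mem_Ico] at hs
    rw [Finset.image_image]
    rw [show ((· + a) ∘ (· - a)) = fun x => x - a + a from rfl]
    ext x
    simp only [Finset.mem_image]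
    constructor
    · rintro ⟨y, hy, rfl⟩
      have := hs.1 hy
      have : y - a + a = y := by omega
      rwa [this]
    · intro hx
      exact ⟨x, hx, by have := hs.1 hx; omega⟩
  · intro s hs
    rw [Finset.image_image]
    rw [show ((· - a) ∘ (· + a)) = fun x => x + a - a from rfl]
    ext x
    simp only [Finset.mem_image]
    constructor
    · rintro ⟨y, hy, rfl⟩
      simpa using hy
    · intro hx
      exact ⟨x, hx, by omega⟩
  · intro s hs
    simp only [Finset.mem_filter, Finset.mem_powerset, Finset.subset_iff, Finset.mem_Ico] at hs
    rw [Finset.card_image_of_injOn]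
    intro x hx y hy hxy
    have := hs.1 hx
    have := hs.1 hy
    simp only at hxy
    omega

lemma gp_split (K M n : ℕ) (hKM : K < M) (t : ℝ) :
    ∑ u ∈ ((Finset.range K ∪ Finset.Ico M n).powerset.filter
        (fun s => ∀ x ∈ s, x + 1 ∉ s)), t ^ u.card
      = (∑ u ∈ ((Finset.range K).powerset.filter (fun s => ∀ x ∈ s, x + 1 ∉ s)), t ^ u.card)
        * (∑ u ∈ ((Finset.Ico M n).powerset.filter (fun s => ∀ x ∈ s, x + 1 ∉ s)),
            t ^ u.card) := by
  classical
  rw [Finset.sum_mul_sum]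
  have hp := Finset.sum_product'
    ((Finset.range K).powerset.filter (fun s => ∀ x ∈ s, x + 1 ∉ s))
    ((Finset.Ico M n).powerset.filter (fun s => ∀ x ∈ s, x + 1 ∉ s))
    (fun x y => t ^ x.card * t ^ y.card)
  rw [← hp]
  symm
  refine Finset.sum_nbij' (fun p => p.1 ∪ p.2)
    (fun u => (u ∩ Finset.range K, u ∩ Finset.Ico M n)) ?_ ?_ ?_ ?_ ?_
  · intro p hp'
    simp only [Finset.mem_product, Finset.mem_filter, Finset.mem_powerset] at hp' ⊢
    obtain ⟨⟨h1, h2⟩, h3, h4⟩ := hp'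
    constructor
    · exact Finset.union_subset (h1.trans Finset.subset_union_left)
        (h3.trans Finset.subset_union_right)
    · intro x hx hc
      rcases Finset.mem_union.1 hx with hx | hx <;> rcases Finset.mem_union.1 hc with hc | hc
      · exact h2 x hx hc
      · have := Finset.mem_range.1 (h1 hx)
        have := (Finset.mem_Ico.1 (h3 hc)).1
        omega
      · have := (Finset.mem_Ico.1 (h3 hx)).1
        have := Finset.mem_range.1 (h1 hc)
        omega
      · exact h4 x hx hc
  · intro u hu
    simp only [Finset.mem_filter, Finset.mem_powerset, Finset.mem_product] at hu ⊢
    obtain ⟨hsub, hok⟩ := hu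
    refine ⟨⟨Finset.inter_subset_right, fun x hx => ?_⟩, Finset.inter_subset_right,
      fun x hx => ?_⟩ <;> simp only [Finset.mem_inter, Finset.mem_range, Finset.mem_Ico] at hx ⊢
    · intro hc
      exact hok x hx.1 hc.1
    · intro hc
      exact hok x hx.1 hc.1
  · intro p hp'
    simp only [Finset.mem_product, Finset.mem_filter, Finset.mem_powerset] at hp'
    obtain ⟨⟨h1, _⟩, h3, _⟩ := hp'
    have e1 : (p.1 ∪ p.2) ∩ Finset.range K = p.1 := by
      ext x
      simp only [Finset.mem_inter, Finset.mem_union, Finset.mem_range]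
      constructor
      · rintro ⟨h | h, hr⟩
        · exact h
        · have := (Finset.mem_Ico.1 (h3 h)).1
          omega
      · intro h
        exact ⟨Or.inl h, Finset.mem_range.1 (h1 h)⟩
    have e2 : (p.1 ∪ p.2) ∩ Finset.Ico M n = p.2 := by
      ext x
      simp only [Finset.mem_inter, Finset.mem_union, Finset.mem_Ico]
      constructor
      · rintro ⟨h | h, hr⟩
        · have := Finset.mem_range.1 (h1 h)
          omega
        · exact h
      · intro h
        exact ⟨Or.inr h, Finset.mem_Ico.1 (h3 h)⟩
    rw [e1, e2]
  · intro u hu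
    simp only [Finset.mem_filter, Finset.mem_powerset] at hu
    dsimp only
    rw [← Finset.inter_union_distrib_left]
    exact Finset.inter_eq_left.2 hu.1
  · intro p hp'
    simp only [Finset.mem_product, Finset.mem_filter, Finset.mem_powerset] at hp'
    obtain ⟨⟨h1, _⟩, h3, _⟩ := hp'
    rw [← pow_add]
    congr 1
    rw [Finset.card_union_of_disjoint]
    exact Finset.disjoint_left.2 (fun x hx hc => by
      have := Finset.mem_range.1 (h1 hx)
      have := (Finset.mem_Ico.1 (h3 hc)).1
      omega)

lemma pathGraph'_adj {n : ℕ} (a b : Fin n) :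
    (pathGraph' n).Adj a b ↔ ((a : ℕ) + 1 = (b : ℕ) ∨ (b : ℕ) + 1 = (a : ℕ)) := Iff.rfl

lemma empty_not_mem_cliquesOf {V : Type*} [Finite V] (G : SimpleGraph V) :
    ∅ ∉ cliquesOf G := by
  unfold cliquesOf
  simp

lemma mem_cliquesOf {V : Type*} [Finite V] (G : SimpleGraph V) (s : Finset V) :
    s ∈ cliquesOf G ↔ s.Nonempty ∧ G.IsClique (s : Set V) := by
  unfold cliquesOf
  simp

lemma fgen_eq_sum {V : Type*} [Finite V] (G : SimpleGraph V) (t : ℝ) :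
    fgen G t = ∑ s ∈ Finset.cons ∅ (cliquesOf G) (empty_not_mem_cliquesOf G), t ^ s.card := by
  rw [Finset.sum_cons]
  simp [fgen]

lemma mem_cons_cliquesOf {V : Type*} [Finite V] (G : SimpleGraph V) (s : Finset V) :
    s ∈ Finset.cons ∅ (cliquesOf G) (empty_not_mem_cliquesOf G) ↔ G.IsClique (s : Set V) := by
  rw [Finset.mem_cons, mem_cliquesOf]
  constructor
  · rintro (rfl | ⟨_, h⟩)
    · simp [SimpleGraph.IsClique]
    · exact h
  · intro h
    rcases Finset.eq_empty_or_nonempty s with rfl | hne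
    · exact Or.inl rfl
    · exact Or.inr ⟨hne, h⟩

example (n : ℕ) (hn : 1 ≤ n) (k : ℕ) (hk1 : 1 ≤ k) (hkn : k ≤ n) (j : Fin n) :
    j ∈ ((pathGraph' n)ᶜ).neighborSet ⟨k - 1, Nat.lt_of_lt_of_le (Nat.sub_lt hk1 Nat.one_pos) hkn⟩ ↔
      ((j : ℕ) ∈ Finset.range (k - 2) ∪ Finset.Ico (k + 1) n) := by
  rw [SimpleGraph.mem_neighborSet, SimpleGraph.compl_adj]
  simp only [Finset.mem_union, Finset.mem_range, Finset.mem_Ico]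
  constructor
  · rintro ⟨hne, hadj⟩
    have h1 : (⟨k - 1, by omega⟩ : Fin n).val ≠ j.val := fun h => hne (Fin.ext h)
    rw [pathGraph'_adj] at hadj
    push_neg at hadj
    have := j.isLt
    simp only at h1 hadj
    omega
  · intro h
    have := j.isLt
    refine ⟨fun he => ?_, fun hadj => ?_⟩
    · have : (⟨k - 1, by omega⟩ : Fin n).val = j.val := by rw [he]
      simp only at this
      omega
    · rw [pathGraph'_adj] at hadj
      simp only at hadj
      omega

lemma nbr_iff (n k : ℕ) (h : k - 1 < n) (hk1 : 1 ≤ k) (hkn : k ≤ n) (j : Fin n) :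
    j ∈ ((pathGraph' n)ᶜ).neighborSet ⟨k - 1, h⟩ ↔
      ((j : ℕ) ∈ Finset.range (k - 2) ∪ Finset.Ico (k + 1) n) := by
  rw [SimpleGraph.mem_neighborSet, SimpleGraph.compl_adj]
  simp only [Finset.mem_union, Finset.mem_range, Finset.mem_Ico]
  constructor
  · rintro ⟨hne, hadj⟩
    have h1 : (⟨k - 1, h⟩ : Fin n).val ≠ j.val := fun hh => hne (Fin.ext hh)
    rw [pathGraph'_adj] at hadj
    push_neg at hadj
    have := j.isLt
    simp only at h1 hadj
    omega
  · intro hj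
    have := j.isLt
    refine ⟨fun he => ?_, fun hadj => ?_⟩
    · have : (⟨k - 1, h⟩ : Fin n).val = j.val := by rw [he]
      simp only at this
      omega
    · rw [pathGraph'_adj] at hadj
      simp only at hadj
      omega

lemma sphere_sum (n k : ℕ) (hn : 1 ≤ n) (hk1 : 1 ≤ k) (hkn : k ≤ n) (t : ℝ) :
    fgen (((pathGraph' n)ᶜ).induce (((pathGraph' n)ᶜ).neighborSet ⟨k - 1, Nat.lt_of_lt_of_le (Nat.sub_lt hk1 Nat.one_pos) hkn⟩)) t
      = ∑ u ∈ ((Finset.range (k - 2) ∪ Finset.Ico (k + 1) n).powerset.filter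
          (fun s => ∀ x ∈ s, x + 1 ∉ s)), t ^ u.card := by
  classical
  have hv : k - 1 < n := by omega
  rw [fgen_eq_sum]
  letI : Fintype ↥(((pathGraph' n)ᶜ).neighborSet (⟨k - 1, hv⟩ : Fin n)) := Fintype.ofFinite _
  refine Finset.sum_nbij' (fun s => s.image (fun x => x.val.val))
    (fun u => Finset.univ.filter
      (fun x : ↥(((pathGraph' n)ᶜ).neighborSet (⟨k - 1, hv⟩ : Fin n)) => x.val.val ∈ u))
    ?_ ?_ ?_ ?_ ?_
  · intro s hs
    rw [mem_cons_cliquesOf] at hs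
    simp only [Finset.mem_filter, Finset.mem_powerset]
    constructor
    · intro c hc
      rw [Finset.mem_image] at hc
      obtain ⟨x, hx, rfl⟩ := hc
      exact (nbr_iff n k hv hk1 hkn x.1).1 x.2
    · intro c hc hc1
      rw [Finset.mem_image] at hc hc1
      obtain ⟨x, hx, hxc⟩ := hc
      obtain ⟨y, hy, hyc⟩ := hc1
      have hne : x ≠ y := fun h => by rw [h, hyc] at hxc; omega
      have := hs (Finset.mem_coe.2 hx) (Finset.mem_coe.2 hy) hne
      rw [SimpleGraph.comap_adj, SimpleGraph.compl_adj, pathGraph'_adj] at this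
      push_neg at this
      simp only [Function.Embedding.coe_subtype] at this
      omega
  · intro u hu
    simp only [Finset.mem_filter, Finset.mem_powerset] at hu
    rw [mem_cons_cliquesOf]
    intro a ha b hb hne
    simp only [Finset.coe_filter, Set.mem_setOf_eq, Finset.mem_univ, true_and] at ha hb
    have hab : (a : Fin n) ≠ (b : Fin n) := fun h => hne (Subtype.ext h)
    rw [SimpleGraph.comap_adj, SimpleGraph.compl_adj, pathGraph'_adj]
    simp only [Function.Embedding.coe_subtype]
    refine ⟨hab, ?_⟩
    rintro (h | h)
    · exact hu.2 _ ha (h ▸ hb)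
    · exact hu.2 _ hb (h ▸ ha)
  · intro s hs
    ext x
    simp only [Finset.mem_filter, Finset.mem_univ, true_and, Finset.mem_image]
    constructor
    · rintro ⟨y, hy, hxy⟩
      have : y = x := Subtype.ext (Fin.ext hxy)
      rwa [← this]
    · intro hx
      exact ⟨x, hx, rfl⟩
  · intro u hu
    simp only [Finset.mem_filter, Finset.mem_powerset] at hu
    ext c
    simp only [Finset.mem_image, Finset.mem_filter, Finset.mem_univ, true_and]
    constructor
    · rintro ⟨x, hx, rfl⟩
      exact hx
    · intro hc
      have hcn : c < n := by
        have := hu.1 hc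
        simp only [Finset.mem_union, Finset.mem_range, Finset.mem_Ico] at this
        omega
      refine ⟨⟨⟨c, hcn⟩, (nbr_iff n k hv hk1 hkn ⟨c, hcn⟩).2 (hu.1 hc)⟩, hc, rfl⟩
  · intro s hs
    rw [Finset.card_image_of_injOn]
    intro x _ y _ hxy
    exact Subtype.ext (Fin.ext hxy)

lemma jac_zero (t : ℝ) : jac 0 t = 1 := rfl
lemma jac_one (t : ℝ) : jac 1 t = 1 := rfl

lemma jac_left (k : ℕ) (hk : 1 ≤ k) (t : ℝ) : gp (k - 2) t = jac (k - 1) t := by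
  rcases Nat.lt_or_ge k 2 with h | h
  · have hk1 : k = 1 := by omega
    subst hk1
    rw [show (1 : ℕ) - 2 = 0 from rfl, gp_zero]
    exact (jac_zero t).symm
  · rw [gp_eq_jac, show k - 2 + 1 = k - 1 from by omega]

lemma jac_right (n k : ℕ) (hkn : k ≤ n) (t : ℝ) : gp (n - (k + 1)) t = jac (n - k) t := by
  rcases Nat.lt_or_ge k n with h | h
  · rw [gp_eq_jac, show n - (k + 1) + 1 = n - k from by omega]
  · rw [show n - (k + 1) = 0 from by omega, show n - k = 0 from by omega, gp_zero, jac_zero]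

/-- Curvature formula for path complements: the simplex generating polynomial of the unit
sphere of the vertex `k ∈ {1, …, n}` of `G_n^+ = (P_n)ᶜ` equals `p_{k-2}(t) · p_{n-k-1}(t)`;
consequently the Euler–Levitt curvature at `k` equals `∫_{-1}^0 p_{k-2}(t) p_{n-k-1}(t) dt`. -/
theorem curvature_formula_pathComplement (n : ℕ) (hn : 1 ≤ n) (k : ℕ) (hk1 : 1 ≤ k)
    (hkn : k ≤ n) :
    (∀ t : ℝ,
      fgen (((pathGraph' n)ᶜ).induce (((pathGraph' n)ᶜ).neighborSet ⟨k - 1, by omega⟩)) t =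
        jac (k - 1) t * jac (n - k) t) ∧
    (∫ t in (-1 : ℝ)..0,
        fgen (((pathGraph' n)ᶜ).induce (((pathGraph' n)ᶜ).neighborSet ⟨k - 1, by omega⟩)) t) =
      ∫ t in (-1 : ℝ)..0, jac (k - 1) t * jac (n - k) t := by
  have h1 : ∀ t : ℝ,
      fgen (((pathGraph' n)ᶜ).induce (((pathGraph' n)ᶜ).neighborSet ⟨k - 1, by omega⟩)) t =
        jac (k - 1) t * jac (n - k) t := by
    intro t
    calc fgen (((pathGraph' n)ᶜ).induce (((pathGraph' n)ᶜ).neighborSet ⟨k - 1, by omega⟩)) t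
        = ∑ u ∈ ((Finset.range (k - 2) ∪ Finset.Ico (k + 1) n).powerset.filter
            (fun s => ∀ x ∈ s, x + 1 ∉ s)), t ^ u.card := sphere_sum n k hn hk1 hkn t
      _ = (∑ u ∈ ((Finset.range (k - 2)).powerset.filter (fun s => ∀ x ∈ s, x + 1 ∉ s)),
              t ^ u.card)
            * (∑ u ∈ ((Finset.Ico (k + 1) n).powerset.filter (fun s => ∀ x ∈ s, x + 1 ∉ s)),
              t ^ u.card) := gp_split (k - 2) (k + 1) n (by omega) t
      _ = gp (k - 2) t * gp (n - (k + 1)) t := by rw [gp_shift (k + 1) n t]; rfl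
      _ = jac (k - 1) t * jac (n - k) t := by rw [jac_left k hk1 t, jac_right n k hkn t]
  exact ⟨h1, intervalIntegral.integral_congr (fun x _ => h1 x)⟩
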